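/- arXiv:1802.00083 — 3 statements merged into one kernel-verified Lean document; each statement's English description precedes it below -/
import Mathlib

section
/- For all real numbers α, β and all (w,z) ∈ ℂ × ℂ⁴, one has r(Γ_{α,β}(w,z)) = e^{4β} · r(w,z). In particular, the linear map Γ_{α,β} maps M := r⁻¹(0) bijectively onto itself. -/
open ComplexConjugate

/-- `r(w,z₁,z₂,z₃,z₄) = Im w − (z₁ conj z₂ + z₂ conj z₁ + z₃ conj z₄ + z₄ conj z₃) − |z₁|⁴`. -/
noncomputable def rdef : ℂ × ℂ × ℂ × ℂ × ℂ → ℝ := fun p =>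
  p.1.im
    - (p.2.1 * conj p.2.2.1 + p.2.2.1 * conj p.2.1
        + p.2.2.2.1 * conj p.2.2.2.2 + p.2.2.2.2 * conj p.2.2.2.1).re
    - ‖p.2.1‖ ^ 4

/-- `M = r⁻¹(0)`. -/
noncomputable def Mdef : Set (ℂ × ℂ × ℂ × ℂ × ℂ) := rdef ⁻¹' {0}

/-- `Γ_{α,β}(w,z₁,z₂,z₃,z₄) = (e^{4β}w, e^{β}z₁, e^{3β}z₂, e^{4β−α}z₃, e^{α}z₄)`. -/
noncomputable def Γdef (α β : ℝ) : ℂ × ℂ × ℂ × ℂ × ℂ → ℂ × ℂ × ℂ × ℂ × ℂ := fun p =>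
  ((Real.exp (4 * β) : ℂ) * p.1, (Real.exp β : ℂ) * p.2.1,
    (Real.exp (3 * β) : ℂ) * p.2.2.1, (Real.exp (4 * β - α) : ℂ) * p.2.2.2.1,
    (Real.exp α : ℂ) * p.2.2.2.2)

/-! `r` is weighted homogeneous: with weights `4β, β, 3β, 4β − α, α` on `w, z₁, …, z₄`, every
term of `r` has weight `4β` (`β + 3β = (4β − α) + α = 4 · β`). Since `Γ_{α,β}` is invertible with
inverse `Γ_{−α,−β}`, it therefore preserves the zero set `M`. -/

lemma ofReal_mul_mul_conj_ofReal_mul (a b : ℝ) (u v : ℂ) :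
    (a : ℂ) * u * conj ((b : ℂ) * v) = ((a * b : ℝ) : ℂ) * (u * conj v) := by
  rw [map_mul, Complex.conj_ofReal]; push_cast; ring

lemma rdef_Γdef (α β : ℝ) (p : ℂ × ℂ × ℂ × ℂ × ℂ) :
    rdef (Γdef α β p) = Real.exp (4 * β) * rdef p := by
  obtain ⟨w, z₁, z₂, z₃, z₄⟩ := p
  have h₁₂ : Real.exp β * Real.exp (3 * β) = Real.exp (4 * β) := by
    rw [← Real.exp_add]; ring_nf
  have h₃₄ : Real.exp (4 * β - α) * Real.exp α = Real.exp (4 * β) := by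
    rw [← Real.exp_add]; ring_nf
  have hnorm : ‖(Real.exp β : ℂ) * z₁‖ ^ 4 = Real.exp (4 * β) * ‖z₁‖ ^ 4 := by
    rw [norm_mul, Complex.norm_real, Real.norm_of_nonneg (Real.exp_pos β).le, mul_pow,
      ← Real.exp_nat_mul]
    norm_num
  simp only [rdef, Γdef, ofReal_mul_mul_conj_ofReal_mul, hnorm, h₁₂, mul_comm (Real.exp (3 * β)),
    h₃₄, mul_comm (Real.exp α), ← mul_add, Complex.re_ofReal_mul, Complex.im_ofReal_mul]
  ring

lemma Γdef_Γdef (α β α' β' : ℝ) (p : ℂ × ℂ × ℂ × ℂ × ℂ) :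
    Γdef α β (Γdef α' β' p) = Γdef (α + α') (β + β') p := by
  simp only [Γdef, ← mul_assoc, ← Complex.ofReal_mul, ← Real.exp_add]
  ring_nf

lemma Γdef_zero_zero : Γdef 0 0 = id := by
  funext p
  simp [Γdef]

lemma Γdef_invOn (α β : ℝ) (s : Set (ℂ × ℂ × ℂ × ℂ × ℂ)) :
    Set.InvOn (Γdef (-α) (-β)) (Γdef α β) s s := by
  constructor <;> intro p _ <;> simp [Γdef_Γdef, Γdef_zero_zero]

lemma Set.mapsTo_preimage_zero_of_comp_eq_mul {X M : Type*} [MulZeroClass M] {f : X → M}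
    {g : X → X} {c : M} (h : ∀ x, f (g x) = c * f x) :
    Set.MapsTo g (f ⁻¹' {0}) (f ⁻¹' {0}) := by
  intro x hx
  simp_all

/-- `r ∘ Γ_{α,β} = e^{4β} r`; in particular `Γ_{α,β}` maps `M = r⁻¹(0)` bijectively
onto itself. -/
theorem stmt_1 (α β : ℝ) :
    (∀ p : ℂ × ℂ × ℂ × ℂ × ℂ, rdef (Γdef α β p) = Real.exp (4 * β) * rdef p) ∧
      Set.BijOn (Γdef α β) Mdef Mdef :=
  ⟨rdef_Γdef α β, (Γdef_invOn α β Mdef).bijOn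
    (Set.mapsTo_preimage_zero_of_comp_eq_mul (rdef_Γdef α β))
    (Set.mapsTo_preimage_zero_of_comp_eq_mul (rdef_Γdef (-α) (-β)))⟩
end

section
/- For all α, β ∈ ℝ, all p ∈ ℂ⁵, and all v ∈ ℂ⁵, one has θ_{Γ_{α,β}(p)}(Γ_{α,β}(v)) = e^{4β} · θ_p(v); that is, the linear maps Γ_{α,β} act by homotheties of the contact form θ = Re(i∂r). -/
open ComplexConjugate

/-- The contact form `θ = Re(i∂r)` at `p = (w,z₁,z₂,z₃,z₄)` evaluated on
`v = (v₀,v₁,v₂,v₃,v₄)`: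
`θ_p(v) = Re(v₀/2 − i(conj z₂ + 2z₁|z₁|²)v₁ − i conj z₁ v₂ − i conj z₄ v₃ − i conj z₃ v₄)`. -/
noncomputable def θdef (p v : ℂ × ℂ × ℂ × ℂ × ℂ) : ℝ :=
  (v.1 / 2
    - Complex.I * (conj p.2.2.1 + 2 * p.2.1 * (‖p.2.1‖ : ℂ) ^ 2) * v.2.1
    - Complex.I * conj p.2.1 * v.2.2.1
    - Complex.I * conj p.2.2.2.2 * v.2.2.2.1
    - Complex.I * conj p.2.2.2.1 * v.2.2.2.2).re

/-!
Give `w, z₁, z₂` the weights `4, 1, 3` and `z₃, z₄` any two weights summing to `4`. Every monomial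
of `θ` (counting `conj zᵢ` like `zᵢ`, and `|z₁|²` with weight `2`) then has total weight `4`, so a
dilation by *real* factors of these weights multiplies `θ` by `t⁴`; reality of the factors is what
lets them pass through `conj` and `‖·‖`. `Γ_{α,β}` is such a dilation with `t = e^β`.
-/

def weightedDilation (t s u : ℝ) (p : ℂ × ℂ × ℂ × ℂ × ℂ) : ℂ × ℂ × ℂ × ℂ × ℂ :=
  ((t : ℂ) ^ 4 * p.1, (t : ℂ) * p.2.1, (t : ℂ) ^ 3 * p.2.2.1, (u : ℂ) * p.2.2.2.1,
    (s : ℂ) * p.2.2.2.2)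

theorem θdef_weightedDilation {t s u : ℝ} (hsu : s * u = t ^ 4) (p v : ℂ × ℂ × ℂ × ℂ × ℂ) :
    θdef (weightedDilation t s u p) (weightedDilation t s u v) = t ^ 4 * θdef p v := by
  have hsu' : (s : ℂ) * u = (t : ℂ) ^ 4 := by exact_mod_cast hsu
  have hnorm : ‖(t : ℂ) * p.2.1‖ ^ 2 = (t : ℂ) ^ 2 * ‖p.2.1‖ ^ 2 := by
    rw [← Complex.ofReal_pow, norm_mul, mul_pow, Complex.norm_real, Real.norm_eq_abs, sq_abs]
    push_cast; rfl
  rw [θdef, θdef, ← Complex.re_ofReal_mul]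
  congr 1
  simp only [weightedDilation, map_mul, map_pow, Complex.conj_ofReal, Complex.ofReal_pow, hnorm]
  linear_combination
    (-Complex.I * conj p.2.2.2.2 * v.2.2.2.1 - Complex.I * conj p.2.2.2.1 * v.2.2.2.2) * hsu'

theorem Γdef_eq_weightedDilation (α β : ℝ) :
    Γdef α β = weightedDilation (Real.exp β) (Real.exp α) (Real.exp (4 * β - α)) := by
  ext1 p
  simp only [Γdef, weightedDilation, ← Complex.ofReal_pow, ← Real.exp_nat_mul]
  norm_num

/-- The linear maps `Γ_{α,β}` act by homotheties of the contact form `θ`: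
`θ_{Γ(p)}(Γ(v)) = e^{4β} θ_p(v)`. -/
theorem stmt_8 (α β : ℝ) (p v : ℂ × ℂ × ℂ × ℂ × ℂ) :
    θdef (Γdef α β p) (Γdef α β v) = Real.exp (4 * β) * θdef p v := by
  have hweights : Real.exp α * Real.exp (4 * β - α) = Real.exp β ^ 4 := by
    rw [← Real.exp_add, ← Real.exp_nat_mul]; ring_nf
  rw [Γdef_eq_weightedDilation, θdef_weightedDilation hweights, ← Real.exp_nat_mul]
  norm_num
end

section
/- Let X be a topological space equipped with its Borel σ-algebra, let μ be a finite Borel measure on X, and let (φ_t)_{t ∈ ℝ} be a family of Borel measurable maps φ_t : X → X each preserving μ, i.e. μ(φ_t⁻¹(S)) = μ(S) for every Borel set S and every t. Suppose A ⊆ X is a set such that for every x ∈ X and every open set V ⊇ A, there exists T ∈ ℝ with φ_t(x) ∈ V for all t ≥ T. Then μ(U) = 0 for every open set U ⊆ X whose closure is disjoint from A. In particular, if some nonempty open set has closure disjoint from A, then μ is not positive on all nonempty open sets. -/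
open MeasureTheory Filter Topology Set

/-
Since `(closure U)ᶜ` is an open neighbourhood of `A`, every orbit eventually stays out of `U`,
so the indicators of `φ_t⁻¹(U)` tend to `0` pointwise. As `μ` is finite, dominated convergence
gives `μ(φ_t⁻¹(U)) → 0`, while invariance keeps `μ(φ_t⁻¹(U)) = μ(U)`.
-/

theorem measure_eq_zero_of_eventually_notMem_preimage {α ι : Type*} [MeasurableSpace α]
    {L : Filter ι} [L.IsCountablyGenerated] [L.NeBot] (μ : Measure α) [IsFiniteMeasure μ]
    {f : ι → α → α} (hf : ∀ i, Measurable (f i)) {s : Set α} (hs : MeasurableSet s)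
    (hpres : ∀ i, μ (f i ⁻¹' s) = μ s) (hleave : ∀ x, ∀ᶠ i in L, f i x ∉ s) :
    μ s = 0 := by
  have hlim : Tendsto (fun i ↦ μ (f i ⁻¹' s)) L (𝓝 (μ ∅)) :=
    tendsto_measure_of_tendsto_indicator_of_isFiniteMeasure L μ (fun i ↦ hf i hs)
      fun x ↦ (hleave x).mono fun _ hx ↦ iff_of_false hx (notMem_empty x)
  simp only [hpres, measure_empty] at hlim
  exact tendsto_nhds_unique tendsto_const_nhds hlim

theorem eventually_notMem_of_closure_inter_eq_empty {X : Type*} [TopologicalSpace X]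
    {φ : ℝ → X → X} {A U : Set X}
    (hattr : ∀ x : X, ∀ V : Set X, IsOpen V → A ⊆ V → ∃ T : ℝ, ∀ t ≥ T, φ t x ∈ V)
    (hU : closure U ∩ A = ∅) (x : X) : ∀ᶠ t in atTop, φ t x ∉ U := by
  have hA : A ⊆ (closure U)ᶜ := fun a ha hcl ↦ (hU.subset ⟨hcl, ha⟩ : a ∈ (∅ : Set X))
  obtain ⟨T, hT⟩ := hattr x _ isClosed_closure.isOpen_compl hA
  exact eventually_atTop.2 ⟨T, fun t ht hmem ↦ hT t ht (subset_closure hmem)⟩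

/-- If `μ` is a finite Borel measure on `X` preserved by every map `φ_t` of a
family `(φ_t)_{t∈ℝ}` of Borel measurable maps, and `A ⊆ X` attracts every orbit
(for every `x` and every open `V ⊇ A` one has `φ_t(x) ∈ V` for all sufficiently
large `t`), then `μ(U) = 0` for every open `U` whose closure is disjoint from
`A`.  In particular, if some nonempty open set has closure disjoint from `A`,
then `μ` is not positive on all nonempty open sets. -/
theorem stmt_15 {X : Type*} [TopologicalSpace X] [MeasurableSpace X] [BorelSpace X]
    (μ : Measure X) [IsFiniteMeasure μ]
    (φ : ℝ → X → X) (hmeas : ∀ t : ℝ, Measurable (φ t))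
    (hpres : ∀ t : ℝ, ∀ S : Set X, MeasurableSet S → μ (φ t ⁻¹' S) = μ S)
    (A : Set X)
    (hattr : ∀ x : X, ∀ V : Set X, IsOpen V → A ⊆ V → ∃ T : ℝ, ∀ t ≥ T, φ t x ∈ V) :
    (∀ U : Set X, IsOpen U → closure U ∩ A = ∅ → μ U = 0) ∧
    ((∃ U : Set X, IsOpen U ∧ U.Nonempty ∧ closure U ∩ A = ∅) →
      ¬ ∀ U : Set X, IsOpen U → U.Nonempty → 0 < μ U) := by
  have hnull : ∀ U : Set X, IsOpen U → closure U ∩ A = ∅ → μ U = 0 := fun U hU hcl ↦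
    measure_eq_zero_of_eventually_notMem_preimage μ hmeas hU.measurableSet
      (fun t ↦ hpres t U hU.measurableSet) (eventually_notMem_of_closure_inter_eq_empty hattr hcl)
  refine ⟨hnull, fun ⟨U, hU, hne, hcl⟩ hpos ↦ ?_⟩
  exact (hpos U hU hne).ne' (hnull U hU hcl)
end
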